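/- Let M ⊆ B(H,K) be a TRO, A ⊆ B(H) a C*-algebra with M* M ⊆ A, and let (m_n)_n be a sequence in M with Σ_n m_n m_n* = I_K (strong convergence, partial sums bounded by I_K). If s ∈ B(H) commutes with every element of A and satisfies s A ⊆ A (e.g., s lies in the centre of A), then ϑ(s) := Σ_n m_n s m_n* commutes with every operator of the form l₁ a l₂* with l₁, l₂ ∈ M and a ∈ A. In particular ϑ(s) lies in the commutant of the closed span of M A M*. -/

import Mathlib

open ContinuousLinearMap

/-- The set of products `a ∘L b` with `a ∈ A`, `b ∈ B`. -/
def opMulSet {H K L : Type*} [NormedAddCommGroup H] [NormedSpace ℂ H]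
    [NormedAddCommGroup K] [NormedSpace ℂ K] [NormedAddCommGroup L] [NormedSpace ℂ L]
    (A : Set (K →L[ℂ] L)) (B : Set (H →L[ℂ] K)) : Set (H →L[ℂ] L) :=
  {x | ∃ a ∈ A, ∃ b ∈ B, x = a ∘L b}

/-- The set of adjoints of elements of `M`. -/
noncomputable def opAdjSet {H K : Type*}
    [NormedAddCommGroup H] [InnerProductSpace ℂ H] [CompleteSpace H]
    [NormedAddCommGroup K] [InnerProductSpace ℂ K] [CompleteSpace K]
    (M : Set (H →L[ℂ] K)) : Set (K →L[ℂ] H) :=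
  {x | ∃ m ∈ M, x = adjoint m}

/-- Closed linear span. -/
def cSpan {E : Type*} [NormedAddCommGroup E] [NormedSpace ℂ E] (s : Set E) : Set E :=
  closure ((Submodule.span ℂ s : Submodule ℂ E) : Set E)

/-!
Write `ϑ(s) = ∑ₙ mₙ s mₙ*` with `∑ₙ mₙ mₙ* = 1` strongly. For `l ∈ M` each `mₙ* l` lies in `A`,
hence commutes with `s`, so `ϑ(s) l = ∑ₙ mₙ mₙ* l s = l s`; dually `l* ϑ(s) = s l*`. Since `s` also
commutes with `a ∈ A`, `ϑ(s) l₁ a l₂* = l₁ s a l₂* = l₁ a s l₂* = l₁ a l₂* ϑ(s)`, and the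
commutant of `ϑ(s)` is a closed subspace.
-/

section StrongSum

variable {𝕜 E F : Type*} [NontriviallyNormedField 𝕜]
  [NormedAddCommGroup E] [NormedSpace 𝕜 E] [NormedAddCommGroup F] [NormedSpace 𝕜 F]
  {m : ℕ → F →L[𝕜] E} {r : ℕ → E →L[𝕜] F} {s : F →L[𝕜] F} {θ : E →L[𝕜] E}

theorem comp_eq_comp_of_hasSum_right (hsum : ∀ ξ, HasSum (fun n => m n (r n ξ)) ξ)
    (hθ : ∀ ξ, HasSum (fun n => m n (s (r n ξ))) (θ ξ)) {l : F →L[𝕜] E}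
    (hl : ∀ n, s ∘L (r n ∘L l) = (r n ∘L l) ∘L s) : θ ∘L l = l ∘L s := by
  ext ξ
  have hterm n : s (r n (l ξ)) = r n (l (s ξ)) := DFunLike.congr_fun (hl n) ξ
  refine (hθ (l ξ)).unique ?_
  simpa only [hterm, comp_apply] using hsum (l (s ξ))

theorem comp_eq_comp_of_hasSum_left (hsum : ∀ ξ, HasSum (fun n => m n (r n ξ)) ξ)
    (hθ : ∀ ξ, HasSum (fun n => m n (s (r n ξ))) (θ ξ)) {l : E →L[𝕜] F}
    (hl : ∀ n, s ∘L (l ∘L m n) = (l ∘L m n) ∘L s) : l ∘L θ = s ∘L l := by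
  ext ξ
  have hterm n : l (m n (s (r n ξ))) = s (l (m n (r n ξ))) :=
    (DFunLike.congr_fun (hl n) (r n ξ)).symm
  refine ((hθ ξ).mapL l).unique ?_
  simpa only [hterm, comp_apply] using (hsum ξ).mapL (s ∘L l)

end StrongSum

theorem comp_comp_comp_commute_of_intertwine {𝕜 E F : Type*} [NontriviallyNormedField 𝕜]
    [NormedAddCommGroup E] [NormedSpace 𝕜 E] [NormedAddCommGroup F] [NormedSpace 𝕜 F]
    {θ : E →L[𝕜] E} {s a : F →L[𝕜] F} {l₁ : F →L[𝕜] E} {l₂ : E →L[𝕜] F}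
    (h₁ : θ ∘L l₁ = l₁ ∘L s) (ha : s ∘L a = a ∘L s) (h₂ : l₂ ∘L θ = s ∘L l₂) :
    θ ∘L (l₁ ∘L a ∘L l₂) = (l₁ ∘L a ∘L l₂) ∘L θ := by
  calc θ ∘L (l₁ ∘L a ∘L l₂) = l₁ ∘L (s ∘L a) ∘L l₂ := by rw [← comp_assoc, h₁]; rfl
    _ = l₁ ∘L a ∘L (s ∘L l₂) := by rw [ha]; rfl
    _ = (l₁ ∘L a ∘L l₂) ∘L θ := by rw [← h₂]; rfl

theorem comp_commute_of_mem_cSpan {E : Type*} [NormedAddCommGroup E] [NormedSpace ℂ E]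
    {θ : E →L[ℂ] E} {S : Set (E →L[ℂ] E)} (hS : ∀ x ∈ S, θ ∘L x = x ∘L θ)
    {x : E →L[ℂ] E} (hx : x ∈ cSpan S) : θ ∘L x = x ∘L θ := by
  have hspan : Submodule.span ℂ S ≤ (Subalgebra.centralizer ℂ {θ}).toSubmodule :=
    Submodule.span_le.2 fun y hy θ' hθ' => (Set.mem_singleton_iff.1 hθ') ▸ hS y hy
  exact closure_minimal hspan (Set.isClosed_centralizer _) hx θ rfl

theorem stmt_9_general {H K : Type*} [NormedAddCommGroup H] [InnerProductSpace ℂ H] [CompleteSpace H]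
    [NormedAddCommGroup K] [InnerProductSpace ℂ K] [CompleteSpace K]
    (M : Submodule ℂ (H →L[ℂ] K))
    (A : NonUnitalStarSubalgebra ℂ (H →L[ℂ] H))
    (hMA : ∀ m₁ ∈ M, ∀ m₂ ∈ M, adjoint m₁ ∘L m₂ ∈ A)
    (m : ℕ → (H →L[ℂ] K)) (hmM : ∀ n, m n ∈ M)
    (hsum : ∀ ξ : K, HasSum (fun n => m n ((adjoint (m n)) ξ)) ξ)
    (s : H →L[ℂ] H)
    (hcomm : ∀ a ∈ A, s ∘L a = a ∘L s)
    (θs : K →L[ℂ] K)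
    (hθ : ∀ ξ : K, HasSum (fun n => m n (s ((adjoint (m n)) ξ))) (θs ξ)) :
    (∀ l₁ ∈ M, ∀ a ∈ A, ∀ l₂ ∈ M,
      θs ∘L (l₁ ∘L a ∘L adjoint l₂) = (l₁ ∘L a ∘L adjoint l₂) ∘L θs) ∧
    (∀ x ∈ cSpan (opMulSet (M : Set (H →L[ℂ] K))
        (opMulSet (A : Set (H →L[ℂ] H)) (opAdjSet (M : Set (H →L[ℂ] K))))),
      θs ∘L x = x ∘L θs) := by
  have hgen : ∀ l₁ ∈ M, ∀ a ∈ A, ∀ l₂ ∈ M,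
      θs ∘L (l₁ ∘L a ∘L adjoint l₂) = (l₁ ∘L a ∘L adjoint l₂) ∘L θs := by
    intro l₁ hl₁ a ha l₂ hl₂
    refine comp_comp_comp_commute_of_intertwine ?_ (hcomm a ha) ?_
    · exact comp_eq_comp_of_hasSum_right hsum hθ fun n => hcomm _ (hMA _ (hmM n) _ hl₁)
    · exact comp_eq_comp_of_hasSum_left hsum hθ fun n => hcomm _ (hMA _ hl₂ _ (hmM n))
  refine ⟨hgen, fun x hx => comp_commute_of_mem_cSpan ?_ hx⟩
  rintro _ ⟨l₁, hl₁, _, ⟨a, ha, _, ⟨l₂, hl₂, rfl⟩, rfl⟩, rfl⟩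
  exact hgen l₁ hl₁ a ha l₂ hl₂

/-- If `M` is a TRO, `A` a C*-algebra with `M* M ⊆ A`, `(m_n) ⊆ M` with
`∑ m_n m_n* = I_K` strongly, and `s` commutes with `A` and satisfies `s A ⊆ A`, then
`ϑ(s) = ∑ m_n s m_n*` commutes with every `l₁ a l₂*` (`l₁, l₂ ∈ M`, `a ∈ A`), hence
lies in the commutant of `[M A M*]`. -/
theorem stmt_9 {H K : Type*} [NormedAddCommGroup H] [InnerProductSpace ℂ H] [CompleteSpace H]
    [NormedAddCommGroup K] [InnerProductSpace ℂ K] [CompleteSpace K]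
    (M : Submodule ℂ (H →L[ℂ] K))
    (hTRO : ∀ a ∈ M, ∀ b ∈ M, ∀ c ∈ M, a ∘L adjoint b ∘L c ∈ M)
    (A : NonUnitalStarSubalgebra ℂ (H →L[ℂ] H)) (hAc : IsClosed (A : Set (H →L[ℂ] H)))
    (hMA : ∀ m₁ ∈ M, ∀ m₂ ∈ M, adjoint m₁ ∘L m₂ ∈ A)
    (m : ℕ → (H →L[ℂ] K)) (hmM : ∀ n, m n ∈ M)
    (hsum : ∀ ξ : K, HasSum (fun n => m n ((adjoint (m n)) ξ)) ξ)
    (hbd : ∀ F : Finset ℕ,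
      ((1 : K →L[ℂ] K) - ∑ n ∈ F, m n ∘L adjoint (m n)).IsPositive)
    (s : H →L[ℂ] H)
    (hcomm : ∀ a ∈ A, s ∘L a = a ∘L s)
    (hsA : ∀ a ∈ A, s ∘L a ∈ A)
    (θs : K →L[ℂ] K)
    (hθ : ∀ ξ : K, HasSum (fun n => m n (s ((adjoint (m n)) ξ))) (θs ξ)) :
    (∀ l₁ ∈ M, ∀ a ∈ A, ∀ l₂ ∈ M,
      θs ∘L (l₁ ∘L a ∘L adjoint l₂) = (l₁ ∘L a ∘L adjoint l₂) ∘L θs) ∧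
    (∀ x ∈ cSpan (opMulSet (M : Set (H →L[ℂ] K))
        (opMulSet (A : Set (H →L[ℂ] H)) (opAdjSet (M : Set (H →L[ℂ] K))))),
      θs ∘L x = x ∘L θs) :=
  stmt_9_general M A hMA m hmM hsum s hcomm θs hθ
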